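/- arXiv:1608.02581 — 4 statements merged into one kernel-verified Lean document; each statement's English description precedes it below -/
import Mathlib

section
/- Let F be a continuous real-valued function on a closed bounded interval [a,b] with least concave majorant F̂, and let Z_F = {x ∈ [a,b] : F̂(x) = F(x)}. If J is a connected component of [a,b] \ Z_F with closure having endpoints α < β, then on [α,β] the function F̂ equals the affine function l interpolating F at α and β, i.e. F̂(x) = F(α) + (x−α)(F(β)−F(α))/(β−α) for all x ∈ [α,β]. -/
open Set

/-- The least concave majorant of `F` on `[a, b]`. -/
noncomputable def leastConcaveMajorant (a b : ℝ) (F : ℝ → ℝ) (x : ℝ) : ℝ :=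
  sInf {y : ℝ | ∃ G : ℝ → ℝ, ConcaveOn ℝ (Set.Icc a b) G ∧
    (∀ z ∈ Set.Icc a b, F z ≤ G z) ∧ y = G x}

/-! The majorant `F̂` is concave, so it lies above its chord `l` through `α` and `β` on `[α, β]`
and below it outside. Both endpoints lie in `Z_F`: at `a` and `b` because the affine majorants
`F a + ε + K (x - a)` squeeze `F̂ a` down to `F a`, and at interior points because `F̂` is
continuous there: an endpoint outside `Z_F` would have a neighbourhood in `{F < F̂}`, hence in
the component, which is impossible for an endpoint of its closure.
Hence `l` interpolates `F` at `α` and `β`. Finally, if `d ≥ 0` is the largest excess of `F` over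
`l` on `[α, β]`, then `l + d` is an affine majorant of `F` on all of `[a, b]`, so `F̂ ≤ l + d`; at a
point where the excess is attained this forces `F̂ ≤ F`, so that point is `α` or `β` and `d = 0`. -/

open Filter Topology

theorem IsPreconnected.Ioo_subset_of_closure_eq_Icc {X : Type*} [LinearOrder X]
    [TopologicalSpace X] [OrderClosedTopology X] {s : Set X} {a b : X} (hs : IsPreconnected s)
    (hcl : closure s = Icc a b) : Ioo a b ⊆ s := fun x hx => by
  have hab : a ≤ b := (hx.1.trans hx.2).le
  have hglb : IsGLB s a :=
    (isGLB_iff_of_subset_of_subset_closure subset_closure le_rfl).2 (hcl ▸ isGLB_Icc hab)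
  have hlub : IsLUB s b :=
    (isLUB_iff_of_subset_of_subset_closure subset_closure le_rfl).2 (hcl ▸ isLUB_Icc hab)
  obtain ⟨y, hys, hyx⟩ := (isGLB_lt_iff hglb).1 hx.1
  obtain ⟨z, hzs, hxz⟩ := (lt_isLUB_iff hlub).1 hx.2
  exact hs.Icc_subset hys hzs ⟨hyx.le, hxz.le⟩

theorem connectedComponentIn_mem_nhds_of_mem_closure {X : Type*} [TopologicalSpace X]
    [LocallyConnectedSpace X] {U : Set X} {t x : X} (hU : U ∈ 𝓝 x)
    (hx : x ∈ closure (connectedComponentIn U t)) : connectedComponentIn U t ∈ 𝓝 x := by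
  obtain ⟨y, hy⟩ := closure_nonempty_iff.1 ⟨x, hx⟩
  have hxy : x ∈ connectedComponentIn U y :=
    (isPreconnected_connectedComponentIn.subset_closure (subset_insert x _)
        (insert_subset hx subset_closure)).subset_connectedComponentIn (mem_insert_of_mem x hy)
      (insert_subset (mem_of_mem_nhds hU) (connectedComponentIn_subset _ _)) (mem_insert x _)
  rw [connectedComponentIn_eq hy, connectedComponentIn_eq hxy]
  exact connectedComponentIn_mem_nhds hU

theorem convexOn_affine {s : Set ℝ} (hs : Convex ℝ s) (c x₀ q : ℝ) :
    ConvexOn ℝ s fun x => c + (x - x₀) * q :=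
  ⟨hs, fun x _ y _ u v _ _ huv => le_of_eq (by
    simp only [smul_eq_mul]; linear_combination (x₀ * q - c) * huv)⟩

theorem concaveOn_affine {s : Set ℝ} (hs : Convex ℝ s) (c x₀ q : ℝ) :
    ConcaveOn ℝ s fun x => c + (x - x₀) * q :=
  ⟨hs, fun x _ y _ u v _ _ huv => le_of_eq (by
    simp only [smul_eq_mul]; linear_combination (c - x₀ * q) * huv)⟩

theorem ConcaveOn.nonpos_of_notMem_Ioo {s : Set ℝ} {f : ℝ → ℝ} (hf : ConcaveOn ℝ s f)
    {α β z : ℝ} (hα : α ∈ s) (hβ : β ∈ s) (hz : z ∈ s) (hαβ : α < β) (hfα : f α = 0)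
    (hfβ : f β = 0) (hzαβ : z ∉ Ioo α β) : f z ≤ 0 := by
  rcases le_or_gt z α with hzα | hαz
  · exact hfα ▸ hf.left_le_of_le_right'' hz hβ hzα hαβ (hfα.trans hfβ.symm).le
  · have hβz : β ≤ z := not_lt.1 fun hzβ => hzαβ ⟨hαz, hzβ⟩
    exact hfβ ▸ hf.right_le_of_le_left'' hα hz hαβ hβz (hfβ.trans hfα.symm).le

theorem ContinuousOn.exists_le_add_mul_abs_sub {F : ℝ → ℝ} {a b x₀ ε : ℝ}
    (hF : ContinuousOn F (Icc a b)) (hx₀ : x₀ ∈ Icc a b) (hε : 0 < ε) :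
    ∃ K, ∀ z ∈ Icc a b, F z ≤ F x₀ + ε + K * |z - x₀| := by
  obtain ⟨δ, hδ, hnear⟩ := Metric.continuousWithinAt_iff.1 (hF x₀ hx₀) ε hε
  obtain ⟨M, hM⟩ := isCompact_Icc.bddAbove_image hF
  have hFM : ∀ z ∈ Icc a b, F z ≤ M := fun z hz => hM (mem_image_of_mem F hz)
  have hK : 0 ≤ (M - F x₀) / δ := div_nonneg (sub_nonneg.2 (hFM x₀ hx₀)) hδ.le
  refine ⟨(M - F x₀) / δ, fun z hz => ?_⟩
  rcases lt_or_ge |z - x₀| δ with hzδ | hzδ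
  · linarith [(abs_sub_lt_iff.1 (hnear hz hzδ)).1, mul_nonneg hK (abs_nonneg (z - x₀))]
  · have : M - F x₀ ≤ (M - F x₀) / δ * |z - x₀| := by
      calc M - F x₀ = (M - F x₀) / δ * δ := by field_simp
        _ ≤ _ := by gcongr
    linarith [hFM z hz]

section LeastConcaveMajorant

variable {a b : ℝ} {F : ℝ → ℝ}

theorem nonempty_concaveMajorant_values (hF : BddAbove (F '' Icc a b)) (x : ℝ) :
    {y : ℝ | ∃ G : ℝ → ℝ, ConcaveOn ℝ (Icc a b) G ∧
      (∀ z ∈ Icc a b, F z ≤ G z) ∧ y = G x}.Nonempty := by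
  obtain ⟨M, hM⟩ := hF
  exact ⟨M, fun _ => M, concaveOn_const M (convex_Icc a b),
    fun z hz => hM (mem_image_of_mem F hz), rfl⟩

theorem leastConcaveMajorant_le {G : ℝ → ℝ} (hG : ConcaveOn ℝ (Icc a b) G)
    (hGF : ∀ z ∈ Icc a b, F z ≤ G z) {x : ℝ} (hx : x ∈ Icc a b) :
    leastConcaveMajorant a b F x ≤ G x :=
  csInf_le ⟨F x, by rintro _ ⟨G, -, hGF, rfl⟩; exact hGF x hx⟩ ⟨G, hG, hGF, rfl⟩

theorem le_leastConcaveMajorant (hF : BddAbove (F '' Icc a b)) {x : ℝ} (hx : x ∈ Icc a b) :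
    F x ≤ leastConcaveMajorant a b F x :=
  le_csInf (nonempty_concaveMajorant_values hF x) (by rintro _ ⟨G, -, hGF, rfl⟩; exact hGF x hx)

theorem concaveOn_leastConcaveMajorant (hF : BddAbove (F '' Icc a b)) :
    ConcaveOn ℝ (Icc a b) (leastConcaveMajorant a b F) := by
  refine ⟨convex_Icc a b, fun x hx y hy u v hu hv huv => ?_⟩
  refine le_csInf (nonempty_concaveMajorant_values hF _) ?_
  rintro _ ⟨G, hG, hGF, rfl⟩
  calc u • leastConcaveMajorant a b F x + v • leastConcaveMajorant a b F y
      ≤ u • G x + v • G y := by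
        gcongr
        exacts [leastConcaveMajorant_le hG hGF hx, leastConcaveMajorant_le hG hGF hy]
    _ ≤ G (u • x + v • y) := hG.2 hx hy hu hv huv

theorem leastConcaveMajorant_left (hab : a ≤ b) (hF : ContinuousOn F (Icc a b)) :
    leastConcaveMajorant a b F a = F a := by
  have ha : a ∈ Icc a b := left_mem_Icc.2 hab
  refine le_antisymm (le_of_forall_pos_le_add fun ε hε => ?_)
    (le_leastConcaveMajorant (isCompact_Icc.bddAbove_image hF) ha)
  obtain ⟨K, hK⟩ := hF.exists_le_add_mul_abs_sub ha hε
  have hGF : ∀ z ∈ Icc a b, F z ≤ F a + ε + (z - a) * K := fun z hz => by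
    have := hK z hz
    rw [abs_of_nonneg (sub_nonneg.2 hz.1)] at this
    linarith
  simpa using leastConcaveMajorant_le (concaveOn_affine (convex_Icc a b) _ a K) hGF ha

theorem leastConcaveMajorant_right (hab : a ≤ b) (hF : ContinuousOn F (Icc a b)) :
    leastConcaveMajorant a b F b = F b := by
  have hb : b ∈ Icc a b := right_mem_Icc.2 hab
  refine le_antisymm (le_of_forall_pos_le_add fun ε hε => ?_)
    (le_leastConcaveMajorant (isCompact_Icc.bddAbove_image hF) hb)
  obtain ⟨K, hK⟩ := hF.exists_le_add_mul_abs_sub hb hε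
  have hGF : ∀ z ∈ Icc a b, F z ≤ F b + ε + (z - b) * -K := fun z hz => by
    have := hK z hz
    rw [abs_of_nonpos (sub_nonpos.2 hz.2)] at this
    linarith
  simpa using leastConcaveMajorant_le (concaveOn_affine (convex_Icc a b) _ b (-K)) hGF hb

theorem setOf_lt_leastConcaveMajorant_mem_nhds (hF : ContinuousOn F (Icc a b)) {x : ℝ}
    (hx : x ∈ Icc a b) (hlt : F x < leastConcaveMajorant a b F x) :
    {y ∈ Icc a b | F y < leastConcaveMajorant a b F y} ∈ 𝓝 x := by
  have hab : a ≤ b := hx.1.trans hx.2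
  have hax : a < x := hx.1.lt_of_ne fun h => hlt.ne' <| by
    rw [← h]; exact leastConcaveMajorant_left hab hF
  have hxb : x < b := hx.2.lt_of_ne fun h => hlt.ne' <| by
    rw [h]; exact leastConcaveMajorant_right hab hF
  have hI : Icc a b ∈ 𝓝 x := Icc_mem_nhds hax hxb
  have hC : ContinuousAt (leastConcaveMajorant a b F) x :=
    (concaveOn_leastConcaveMajorant (isCompact_Icc.bddAbove_image hF)).continuousOn_interior
      |>.continuousAt (by rw [interior_Icc]; exact Ioo_mem_nhds hax hxb)
  filter_upwards [hI, (hF.continuousAt hI).eventually_lt hC hlt] with y hy hlty using ⟨hy, hlty⟩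

theorem leastConcaveMajorant_eq_chord (hF : ContinuousOn F (Icc a b)) {α β : ℝ} (hαβ : α < β)
    (hsub : Icc α β ⊆ Icc a b)
    (hα : leastConcaveMajorant a b F α = F α) (hβ : leastConcaveMajorant a b F β = F β)
    (hlt : ∀ x ∈ Ioo α β, F x < leastConcaveMajorant a b F x) :
    ∀ x ∈ Icc α β, leastConcaveMajorant a b F x = F α + (x - α) * (F β - F α) / (β - α) := by
  set C := leastConcaveMajorant a b F
  set q := (F β - F α) / (β - α)
  set L : ℝ → ℝ := fun x => F α + (x - α) * q
  have hαI : α ∈ Icc a b := hsub (left_mem_Icc.2 hαβ.le)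
  have hβI : β ∈ Icc a b := hsub (right_mem_Icc.2 hαβ.le)
  have hbdd : BddAbove (F '' Icc a b) := isCompact_Icc.bddAbove_image hF
  have hD : ConcaveOn ℝ (Icc a b) (fun x => C x - L x) :=
    (concaveOn_leastConcaveMajorant hbdd).sub (convexOn_affine (convex_Icc a b) _ _ _)
  have hDα : C α - L α = 0 := by simp [L, hα]
  have hDβ : C β - L β = 0 := by
    have : β - α ≠ 0 := sub_ne_zero.2 hαβ.ne'
    simp only [L, q, hβ]; field_simp; ring
  have hL_le : ∀ x ∈ Icc α β, L x ≤ C x := fun x hx => sub_nonneg.1 <| by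
    simpa [hDα, hDβ] using hD.ge_on_segment hαI hβI ((segment_eq_Icc hαβ.le).symm ▸ hx)
  have hle_L : ∀ z ∈ Icc a b, z ∉ Ioo α β → C z ≤ L z := fun z hz hzαβ =>
    sub_nonpos.1 (hD.nonpos_of_notMem_Ioo hαI hβI hz hαβ hDα hDβ hzαβ)
  obtain ⟨xm, hxm, hmax⟩ := isCompact_Icc.exists_isMaxOn (nonempty_Icc.2 hαβ.le)
    ((hF.mono hsub).sub (by fun_prop : Continuous L).continuousOn)
  set d := F xm - L xm
  have hexcess : ∀ z ∈ Icc α β, F z - L z ≤ d := fun z hz => hmax hz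
  have hd : 0 ≤ d := by simpa [L] using hexcess α (left_mem_Icc.2 hαβ.le)
  have hCd : ∀ z ∈ Icc a b, C z ≤ L z + d := by
    refine fun z hz => leastConcaveMajorant_le (concaveOn_affine (convex_Icc a b) (F α + d) α q)
      (fun y hy => ?_) hz |>.trans_eq (by ring)
    by_cases hyαβ : y ∈ Ioo α β
    · linarith [hexcess y (Ioo_subset_Icc_self hyαβ)]
    · linarith [le_leastConcaveMajorant hbdd hy, hle_L y hy hyαβ]
  have hd0 : d = 0 := by
    by_contra hne
    have hxm' : xm ∈ Ioo α β := by
      refine ⟨hxm.1.lt_of_ne ?_, hxm.2.lt_of_ne ?_⟩ <;> rintro rfl <;> simp_all [d]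
    linarith [hlt xm hxm', hCd xm (hsub hxm)]
  intro x hx
  rw [mul_div_assoc]
  exact le_antisymm (by linarith [hCd x (hsub hx)]) (hL_le x hx)

end LeastConcaveMajorant

theorem stmt2_general (a b : ℝ) (F : ℝ → ℝ)
    (hF : ContinuousOn F (Set.Icc a b))
    (Z : Set ℝ)
    (hZ : Z = {x ∈ Set.Icc a b | leastConcaveMajorant a b F x = F x})
    (J : Set ℝ) (t : ℝ)
    (hJ : J = connectedComponentIn (Set.Icc a b \ Z) t)
    (α β : ℝ) (hαβ : α < β) (hclos : closure J = Set.Icc α β) :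
    ∀ x ∈ Set.Icc α β,
      leastConcaveMajorant a b F x =
        F α + (x - α) * (F β - F α) / (β - α) := by
  have hbdd : BddAbove (F '' Icc a b) := isCompact_Icc.bddAbove_image hF
  have hJU : J ⊆ Icc a b \ Z := hJ ▸ connectedComponentIn_subset _ _
  have hsub : Icc α β ⊆ Icc a b := hclos ▸ closure_minimal (hJU.trans sdiff_subset) isClosed_Icc
  have hlt_of_notMem : ∀ x ∈ Icc a b, x ∉ Z → F x < leastConcaveMajorant a b F x :=
    fun x hx hxZ => (le_leastConcaveMajorant hbdd hx).lt_of_ne fun h => hxZ (hZ ▸ ⟨hx, h.symm⟩)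
  have hend : ∀ x ∈ Icc α β, x ∉ Ioo α β → x ∈ Z := by
    intro x hx hxαβ
    by_contra hxZ
    have hU : Icc a b \ Z ∈ 𝓝 x :=
      mem_of_superset (setOf_lt_leastConcaveMajorant_mem_nhds hF (hsub hx)
        (hlt_of_notMem x (hsub hx) hxZ)) fun y hy => ⟨hy.1, fun hyZ => hy.2.ne' (hZ ▸ hyZ).2⟩
    have hJx : J ∈ 𝓝 x :=
      hJ ▸ connectedComponentIn_mem_nhds_of_mem_closure hU (hJ ▸ hclos ▸ hx)
    rw [← interior_Icc, ← hclos] at hxαβ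
    exact hxαβ (mem_interior_iff_mem_nhds.2 (mem_of_superset hJx subset_closure))
  have hαZ := hend α (left_mem_Icc.2 hαβ.le) fun h => h.1.false
  have hβZ := hend β (right_mem_Icc.2 hαβ.le) fun h => h.2.false
  rw [hZ] at hαZ hβZ
  refine leastConcaveMajorant_eq_chord hF hαβ hsub hαZ.2 hβZ.2 fun x hx => ?_
  have hJ_pre : IsPreconnected J := hJ ▸ isPreconnected_connectedComponentIn
  have hxU := hJU (hJ_pre.Ioo_subset_of_closure_eq_Icc hclos hx)
  exact hlt_of_notMem x hxU.1 hxU.2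

theorem stmt2 (a b : ℝ) (hab : a < b) (F : ℝ → ℝ)
    (hF : ContinuousOn F (Set.Icc a b))
    (Z : Set ℝ)
    (hZ : Z = {x ∈ Set.Icc a b | leastConcaveMajorant a b F x = F x})
    (J : Set ℝ) (t : ℝ) (ht : t ∈ Set.Icc a b \ Z)
    (hJ : J = connectedComponentIn (Set.Icc a b \ Z) t)
    (α β : ℝ) (hαβ : α < β) (hclos : closure J = Set.Icc α β) :
    ∀ x ∈ Set.Icc α β,
      leastConcaveMajorant a b F x =
        F α + (x - α) * (F β - F α) / (β - α) :=
  stmt2_general a b F hF Z hZ J t hJ α β hαβ hclos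
end

section
/- Let P_L(x) = A x³ + B x² + C x + D and P_R(x) = W x³ + X x² + Y x + Z be real cubic polynomials with A W ≠ 0. Suppose a1 < b1 are real numbers and y0 is a real number such that P_L'(a1) = y0, P_R'(b1) = y0, and y0 = (P_R(b1) − P_L(a1))/(b1 − a1). Define γ = 3A y0 + B² − 3AC, δ = 3W y0 + X² − 3WY, μ2 = −2γ/(27A²), μ3 = 2δ/(27W²), and μ1 = (1/3)(X/W − B/A) y0 + (Z + 2X³/(27W²) − YX/(3W)) − (D + 2B³/(27A²) − BC/(3A)). Assume also that a1 = (−B + √γ)/(3A) or a1 = (−B − √γ)/(3A), and b1 = (−X + √δ)/(3W) or b1 = (−X − √δ)/(3W), with γ ≥ 0 and δ ≥ 0. Then y0 satisfies the sextic equation (μ1² − μ2² γ − μ3² δ)² − 4 μ2² μ3² γ δ = 0. -/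
/-!
Put `u = 3 A a₁ + B` and `v = 3 W b₁ + X`. Tangency gives `u² = γ` and `v² = δ`, and the cubic minus
its tangent line at `a₁` takes the value `D + 2 B³ / (27 A²) - B C / (3 A) + B y₀ / (3 A) + μ₂ u`,
likewise on the right with `μ₃ v`. The slope condition says the two tangent lines coincide, so
equating their intercepts gives `μ₁ = μ₂ u + μ₃ v`; the sextic is the product of `μ₁ ± μ₂ u ± μ₃ v`
over the four sign choices.
-/

theorem sq_three_mul_add_eq_of_cubic_deriv_eq {R : Type*} [CommRing R] {A B C t y : R}
    (hy : 3 * A * t ^ 2 + 2 * B * t + C = y) :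
    (3 * A * t + B) ^ 2 = 3 * A * y + B ^ 2 - 3 * A * C := by
  linear_combination 3 * A * hy

theorem cubic_sub_tangent_eq {K : Type*} [Field K] [CharZero K] {A B C t y : K} (D : K)
    (hA : A ≠ 0) (hy : 3 * A * t ^ 2 + 2 * B * t + C = y) :
    A * t ^ 3 + B * t ^ 2 + C * t + D - y * t =
      D + 2 * B ^ 3 / (27 * A ^ 2) - B * C / (3 * A) + B * y / (3 * A)
        - 2 * (3 * A * t + B) ^ 3 / (27 * A ^ 2) := by
  field_simp
  linear_combination 27 * A * (3 * A * t + B) * hy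

theorem sextic_eq_zero_of_eq_add {R : Type*} [CommRing R] {m₁ m₂ m₃ u v : R}
    (h : m₁ = m₂ * u + m₃ * v) :
    (m₁ ^ 2 - m₂ ^ 2 * u ^ 2 - m₃ ^ 2 * v ^ 2) ^ 2 - 4 * m₂ ^ 2 * m₃ ^ 2 * u ^ 2 * v ^ 2 = 0 := by
  subst h; ring

theorem stmt10_general (A B C D W X Y Z : ℝ) (hAW : A * W ≠ 0)
    (a1 b1 y0 : ℝ) (hab : a1 < b1)
    (PL PR : ℝ → ℝ)
    (hPL : ∀ x, PL x = A * x ^ 3 + B * x ^ 2 + C * x + D)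
    (hPR : ∀ x, PR x = W * x ^ 3 + X * x ^ 2 + Y * x + Z)
    (hL' : 3 * A * a1 ^ 2 + 2 * B * a1 + C = y0)
    (hR' : 3 * W * b1 ^ 2 + 2 * X * b1 + Y = y0)
    (hslope : y0 = (PR b1 - PL a1) / (b1 - a1))
    (γ δ μ1 μ2 μ3 : ℝ)
    (hγ : γ = 3 * A * y0 + B ^ 2 - 3 * A * C)
    (hδ : δ = 3 * W * y0 + X ^ 2 - 3 * W * Y)
    (hμ2 : μ2 = -(2 * γ) / (27 * A ^ 2))
    (hμ3 : μ3 = 2 * δ / (27 * W ^ 2))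
    (hμ1 : μ1 = (1 / 3) * (X / W - B / A) * y0 +
      (Z + 2 * X ^ 3 / (27 * W ^ 2) - Y * X / (3 * W)) -
      (D + 2 * B ^ 3 / (27 * A ^ 2) - B * C / (3 * A))) :
    (μ1 ^ 2 - μ2 ^ 2 * γ - μ3 ^ 2 * δ) ^ 2 - 4 * μ2 ^ 2 * μ3 ^ 2 * γ * δ = 0 := by
  have hA : A ≠ 0 := left_ne_zero_of_mul hAW
  have hW : W ≠ 0 := right_ne_zero_of_mul hAW
  have hγu : γ = (3 * A * a1 + B) ^ 2 := hγ ▸ (sq_three_mul_add_eq_of_cubic_deriv_eq hL').symm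
  have hδv : δ = (3 * W * b1 + X) ^ 2 := hδ ▸ (sq_three_mul_add_eq_of_cubic_deriv_eq hR').symm
  have hintercept : PR b1 - y0 * b1 = PL a1 - y0 * a1 := by
    rw [eq_div_iff (sub_ne_zero_of_ne hab.ne')] at hslope
    linear_combination -hslope
  have hL := cubic_sub_tangent_eq D hA hL'
  have hR := cubic_sub_tangent_eq Z hW hR'
  rw [hPL, hPR] at hintercept
  have hμ : μ1 = μ2 * (3 * A * a1 + B) + μ3 * (3 * W * b1 + X) := by
    rw [hμ1, hμ2, hμ3, hγu, hδv]
    linear_combination hL - hR + hintercept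
  rw [hγu, hδv]
  exact sextic_eq_zero_of_eq_add hμ

theorem stmt10 (A B C D W X Y Z : ℝ) (hAW : A * W ≠ 0)
    (a1 b1 y0 : ℝ) (hab : a1 < b1)
    (PL PR : ℝ → ℝ)
    (hPL : ∀ x, PL x = A * x ^ 3 + B * x ^ 2 + C * x + D)
    (hPR : ∀ x, PR x = W * x ^ 3 + X * x ^ 2 + Y * x + Z)
    (hL' : 3 * A * a1 ^ 2 + 2 * B * a1 + C = y0)
    (hR' : 3 * W * b1 ^ 2 + 2 * X * b1 + Y = y0)
    (hslope : y0 = (PR b1 - PL a1) / (b1 - a1))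
    (γ δ μ1 μ2 μ3 : ℝ)
    (hγ : γ = 3 * A * y0 + B ^ 2 - 3 * A * C)
    (hδ : δ = 3 * W * y0 + X ^ 2 - 3 * W * Y)
    (hμ2 : μ2 = -(2 * γ) / (27 * A ^ 2))
    (hμ3 : μ3 = 2 * δ / (27 * W ^ 2))
    (hμ1 : μ1 = (1 / 3) * (X / W - B / A) * y0 +
      (Z + 2 * X ^ 3 / (27 * W ^ 2) - Y * X / (3 * W)) -
      (D + 2 * B ^ 3 / (27 * A ^ 2) - B * C / (3 * A)))
    (hγ0 : 0 ≤ γ) (hδ0 : 0 ≤ δ)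
    (ha1 : a1 = (-B + Real.sqrt γ) / (3 * A) ∨ a1 = (-B - Real.sqrt γ) / (3 * A))
    (hb1 : b1 = (-X + Real.sqrt δ) / (3 * W) ∨ b1 = (-X - Real.sqrt δ) / (3 * W)) :
    (μ1 ^ 2 - μ2 ^ 2 * γ - μ3 ^ 2 * δ) ^ 2 - 4 * μ2 ^ 2 * μ3 ^ 2 * γ * δ = 0 :=
  stmt10_general A B C D W X Y Z hAW a1 b1 y0 hab PL PR hPL hPR hL' hR' hslope γ δ μ1 μ2 μ3 hγ hδ
    hμ2 hμ3 hμ1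
end

section
/- Let F be differentiable on [a,b] with F' integrable, so that F(v) − F(u) = ∫_u^v F'(t) dt for all u,v in [a,b]. Let R ⊆ [a,b] be an interval on which F is strictly concave and increasing. Suppose I = (a1,b1) and J = (a2,b2) are bridge intervals of F with b1 ∈ R, b2 ∈ R, I ∩ J ≠ ∅, and b1 < b2. Then a2 < a1. -/
open Set intervalIntegral

/-- `(α, β)` is a bridge interval for `F` on `[a, b]`: the chord over `(α, β)`
strictly majorizes `F` inside the interval, and the slope of the chord matches
`F'` at each endpoint (the derivative condition being omitted at an endpoint of
`[a, b]`). -/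
def IsBridgeInterval (a b : ℝ) (F : ℝ → ℝ) (α β : ℝ) : Prop :=
  a ≤ α ∧ α < β ∧ β ≤ b ∧
  (∀ x ∈ Set.Ioo α β, F x < F α + (x - α) * (F β - F α) / (β - α)) ∧
  (α = a ∨ deriv F α = (F β - F α) / (β - α)) ∧
  (β = b ∨ deriv F β = (F β - F α) / (β - α))

/-!
Suppose `a₁ ≤ a₂`. Then `a₂ < b₁ < b₂`, and following chords of `F` from the
chord of `I` we get `slope F a₁ b₁ ≤ slope F a₂ b₁ < slope F a₂ b₂ < slope F b₁ b₂`,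
the strict steps because `F` lies strictly below the chord of `J` at `b₁`.
But strict concavity on `R` bounds `slope F b₁ b₂` by the tangent slope
`F'(b₁)`, which the bridge condition at `b₁` makes equal to `slope F a₁ b₁`.
-/

namespace IsBridgeInterval

variable {a b α β x : ℝ} {F : ℝ → ℝ}

theorem lt_chord (h : IsBridgeInterval a b F α β) (hx : x ∈ Ioo α β) :
    F x < F α + slope F α β * (x - α) := by
  convert h.2.2.2.1 x hx using 2
  rw [slope_def_field]
  ring

theorem slope_left_lt (h : IsBridgeInterval a b F α β) (hx : x ∈ Ioo α β) :
    slope F α x < slope F α β := by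
  rw [slope_def_field F α x, div_lt_iff₀ (sub_pos.2 hx.1)]
  linarith [h.lt_chord hx]

theorem slope_lt_slope_right (h : IsBridgeInterval a b F α β) (hx : x ∈ Ioo α β) :
    slope F α β < slope F x β := by
  have hβ : F β = F α + slope F α β * (β - α) := by
    rw [slope_def_field, div_mul_cancel₀ _ (sub_pos.2 h.2.1).ne']
    ring
  rw [slope_def_field F x β, lt_div_iff₀ (sub_pos.2 hx.2)]
  linarith [h.lt_chord hx]

theorem deriv_right_eq_slope (h : IsBridgeInterval a b F α β) (hβ : β < b) :
    deriv F β = slope F α β := by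
  rw [slope_def_field]
  exact h.2.2.2.2.2.resolve_left hβ.ne

theorem right_mem_Icc (h : IsBridgeInterval a b F α β) : β ∈ Icc a b :=
  ⟨h.1.trans h.2.1.le, h.2.2.1⟩

end IsBridgeInterval

theorem stmt11_general (a b : ℝ) (F : ℝ → ℝ)
    (hFdiff : ∀ x ∈ Set.Icc a b, DifferentiableAt ℝ F x)
    (r1 r2 : ℝ)
    (hconc : StrictConcaveOn ℝ (Set.Icc r1 r2) F)
    (a1 b1 a2 b2 : ℝ)
    (hI : IsBridgeInterval a b F a1 b1)
    (hJ : IsBridgeInterval a b F a2 b2)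
    (hb1R : b1 ∈ Set.Icc r1 r2) (hb2R : b2 ∈ Set.Icc r1 r2)
    (hmeet : (Set.Ioo a1 b1 ∩ Set.Ioo a2 b2).Nonempty)
    (hb : b1 < b2) :
    a2 < a1 := by
  by_contra! h
  obtain ⟨x, ⟨-, hxb1⟩, hxa2, -⟩ := hmeet
  have hb1J : b1 ∈ Ioo a2 b2 := ⟨hxa2.trans hxb1, hb⟩
  have hI_a2 : slope F a1 b1 ≤ slope F a2 b1 := by
    rcases h.eq_or_lt with rfl | h
    · exact le_rfl
    · exact (hI.slope_lt_slope_right ⟨h, hb1J.1⟩).le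
  have htangent := hconc.slope_lt_deriv hb1R hb2R hb (hFdiff b1 hI.right_mem_Icc)
  rw [hI.deriv_right_eq_slope (hb.trans_le hJ.2.2.1)] at htangent
  exact (calc
    slope F a1 b1 ≤ slope F a2 b1 := hI_a2
    _ < slope F a2 b2 := hJ.slope_left_lt hb1J
    _ < slope F b1 b2 := hJ.slope_lt_slope_right hb1J
    _ < slope F a1 b1 := htangent).false

theorem stmt11 (a b : ℝ) (hab : a < b) (F : ℝ → ℝ)
    (hFdiff : ∀ x ∈ Set.Icc a b, DifferentiableAt ℝ F x)
    (hFTC : ∀ u ∈ Set.Icc a b, ∀ v ∈ Set.Icc a b,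
      F v - F u = ∫ t in u..v, deriv F t)
    (hint : IntervalIntegrable (deriv F) MeasureTheory.volume a b)
    (r1 r2 : ℝ) (hR : Set.Icc r1 r2 ⊆ Set.Icc a b)
    (hconc : StrictConcaveOn ℝ (Set.Icc r1 r2) F)
    (hmono : StrictMonoOn F (Set.Icc r1 r2))
    (a1 b1 a2 b2 : ℝ)
    (hI : IsBridgeInterval a b F a1 b1)
    (hJ : IsBridgeInterval a b F a2 b2)
    (hb1R : b1 ∈ Set.Icc r1 r2) (hb2R : b2 ∈ Set.Icc r1 r2)
    (hmeet : (Set.Ioo a1 b1 ∩ Set.Ioo a2 b2).Nonempty)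
    (hb : b1 < b2) :
    a2 < a1 :=
  stmt11_general a b F hFdiff r1 r2 hconc a1 b1 a2 b2 hI hJ hb1R hb2R hmeet hb
end

section
/- Let F be continuous on [a,b] with maximum value M, and suppose c1 ∈ (a,b] is a point with F(c1) = M such that F is concave on [a,c1]. Then the least concave majorant F̂ of F satisfies F̂(x) = F(x) for all x ∈ [a,c1]. (Indeed, the function m defined by m(t) = F(t) for t ∈ [a,c1] and m(t) = M for t ∈ (c1,b] is a concave majorant of F on [a,b].) -/
open Set

/-!
Since `F` is concave on `[a, c₁]` and attains its maximum at the right endpoint, it is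
nondecreasing there. Hence `m(t) = F (min t c₁)`, a nondecreasing concave function of the concave
function `min t c₁`, is concave; it majorizes `F` on `[a, b]` because `m = M` beyond `c₁`, and it
agrees with `F` on `[a, c₁]`, which pins the least concave majorant down there.
-/

theorem ConcaveOn.monotoneOn_Icc_of_le_right {a c : ℝ} {f : ℝ → ℝ}
    (hf : ConcaveOn ℝ (Icc a c) f) (hmax : ∀ x ∈ Icc a c, f x ≤ f c) :
    MonotoneOn f (Icc a c) := by
  intro s hs t ht hst
  have hseg : t ∈ segment ℝ s c := by rw [segment_eq_Icc hs.2]; exact ⟨hst, ht.2⟩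
  have hmin := hf.ge_on_segment hs (right_mem_Icc.2 (hs.1.trans hs.2)) hseg
  rwa [min_eq_left (hmax s hs)] at hmin

theorem ConcaveOn.comp_min_right {a c : ℝ} {f : ℝ → ℝ} (hf : ConcaveOn ℝ (Icc a c) f)
    (hmono : MonotoneOn f (Icc a c)) (hac : a ≤ c) :
    ConcaveOn ℝ (Ici a) (fun t => f (min t c)) := by
  have himage : (fun t => min t c) '' Ici a = Icc a c := by
    ext y
    constructor
    · rintro ⟨t, ht, rfl⟩
      exact ⟨le_min ht hac, min_le_right t c⟩
    · intro hy
      exact ⟨y, hy.1, min_eq_left hy.2⟩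
  have hmin : ConcaveOn ℝ (Ici a) (fun t => min t c) :=
    (concaveOn_id (convex_Ici a)).inf (concaveOn_const c (convex_Ici a))
  rw [← himage] at hf hmono
  exact hf.comp hmin hmono

theorem leastConcaveMajorant_eq_of_concaveOn {a b x : ℝ} {F G : ℝ → ℝ} (hx : x ∈ Icc a b)
    (hG : ConcaveOn ℝ (Icc a b) G) (hFG : ∀ z ∈ Icc a b, F z ≤ G z) (hGx : G x = F x) :
    leastConcaveMajorant a b F x = F x := by
  apply le_antisymm
  · refine csInf_le ⟨F x, ?_⟩ ⟨G, hG, hFG, hGx.symm⟩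
    rintro y ⟨H, -, hFH, rfl⟩
    exact hFH x hx
  · refine le_csInf ⟨G x, G, hG, hFG, rfl⟩ ?_
    rintro y ⟨H, -, hFH, rfl⟩
    exact hFH x hx

theorem stmt17_general (a b : ℝ) (F : ℝ → ℝ)
    (M : ℝ) (hM : ∀ x ∈ Set.Icc a b, F x ≤ M)
    (c1 : ℝ) (hc1 : c1 ∈ Set.Ioc a b) (hc1M : F c1 = M)
    (hconc : ConcaveOn ℝ (Set.Icc a c1) F) :
    ∀ x ∈ Set.Icc a c1, leastConcaveMajorant a b F x = F x := by
  obtain ⟨hac1, hc1b⟩ := hc1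
  have hmono : MonotoneOn F (Icc a c1) :=
    hconc.monotoneOn_Icc_of_le_right fun t ht => hc1M ▸ hM t ⟨ht.1, ht.2.trans hc1b⟩
  have hm_conc : ConcaveOn ℝ (Icc a b) (fun t => F (min t c1)) :=
    (hconc.comp_min_right hmono hac1.le).subset Icc_subset_Ici_self (convex_Icc a b)
  have hm_maj : ∀ t ∈ Icc a b, F t ≤ F (min t c1) := by
    intro t ht
    rcases le_total t c1 with h | h
    · rw [min_eq_left h]
    · rw [min_eq_right h, hc1M]
      exact hM t ht
  intro x hx
  exact leastConcaveMajorant_eq_of_concaveOn ⟨hx.1, hx.2.trans hc1b⟩ hm_conc hm_maj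
    (by rw [min_eq_left hx.2])

theorem stmt17 (a b : ℝ) (hab : a < b) (F : ℝ → ℝ)
    (hF : ContinuousOn F (Set.Icc a b))
    (M : ℝ) (hM : ∀ x ∈ Set.Icc a b, F x ≤ M)
    (c1 : ℝ) (hc1 : c1 ∈ Set.Ioc a b) (hc1M : F c1 = M)
    (hconc : ConcaveOn ℝ (Set.Icc a c1) F) :
    ∀ x ∈ Set.Icc a c1, leastConcaveMajorant a b F x = F x :=
  stmt17_general a b F M hM c1 hc1 hc1M hconc
end
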